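/- Every element of order 2 in PGL(2,ℤ) is conjugate in PGL(2,ℤ) to [S], to [N], or to [T]. -/

import Mathlib

/-!
Lift `p` to `M ∈ GL(2,ℤ)`. Since `[M]` has order 2, `M²` is a scalar `±1` while `M` is not,
and this forces `M` to be traceless: `M = [[a, b], [c, -a]]` with `|a² + bc| = |det M| = 1`.
Conjugation by the shears `[[1, t], [0, 1]]` and by `T` acts on `(a, b, c)` like the reduction
of binary quadratic forms, and a descent on `|c|` reaches `c = 0` or `2|a| ≤ |c| ≤ |b|`.
With `|a² + bc| = 1` this leaves `a = ±1, c = 0`, which one more shear brings to `±N` or to a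
conjugate of `S`, or `a = 0, b = ±1, c = ±1`, which is `±S` or `±T`.
-/

open Matrix

abbrev GL2Z := GL (Fin 2) ℤ

/-- PGL(2,ℤ): the quotient of GL(2,ℤ) by its center {I, -I}. -/
abbrev PGL2Z := GL2Z ⧸ Subgroup.center GL2Z

/-- The image of a matrix in PGL(2,ℤ). -/
def cls (M : GL2Z) : PGL2Z := QuotientGroup.mk M

def Smat : GL2Z := ⟨!![0,1;1,0], !![0,1;1,0], by decide, by decide⟩
def Nmat : GL2Z := ⟨!![-1,0;0,1], !![-1,0;0,1], by decide, by decide⟩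
def Tmat : GL2Z := ⟨!![0,-1;1,0], !![0,1;-1,0], by decide, by decide⟩
def Umat : GL2Z := ⟨!![0,-1;1,1], !![1,1;-1,0], by decide, by decide⟩

lemma Int.exists_two_mul_abs_add_mul_le (a c : ℤ) (hc : c ≠ 0) :
    ∃ t : ℤ, 2 * |a + t * c| ≤ |c| := by
  have hn : 0 < c.natAbs := Int.natAbs_pos.mpr hc
  obtain ⟨t, ht⟩ := Int.natAbs_dvd.mp (Int.dvd_bmod_sub_self (x := a) (m := c.natAbs))
  have hb : |a.bmod c.natAbs| ≤ (c.natAbs : ℤ) / 2 :=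
    abs_le.mpr ⟨Int.le_bmod hn, (Int.bmod_le hn).trans (by omega)⟩
  refine ⟨t, ?_⟩
  rw [show a + t * c = a.bmod c.natAbs by linarith, Int.abs_eq_natAbs c]
  omega

namespace Matrix

variable {R : Type*} [CommRing R]

lemma exists_eq_traceless_of_mul_self_mem_range_scalar [IsDomain R]
    (A : Matrix (Fin 2) (Fin 2) R)
    (hsq : A * A ∈ Set.range (scalar (Fin 2))) (hA : A ∉ Set.range (scalar (Fin 2))) :
    ∃ a b c : R, A = !![a, b; c, -a] := by
  obtain ⟨a, b, c, d, rfl⟩ : ∃ a b c d, A = !![a, b; c, d] := ⟨_, _, _, _, eta_fin_two A⟩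
  obtain ⟨r, hr⟩ := hsq
  have h₀₀ : a * a + b * c = r := by simpa using (congr_fun₂ hr 0 0).symm
  have h₀₁ : a * b + b * d = 0 := by simpa using (congr_fun₂ hr 0 1).symm
  have h₁₀ : c * a + d * c = 0 := by simpa using (congr_fun₂ hr 1 0).symm
  have h₁₁ : c * b + d * d = r := by simpa using (congr_fun₂ hr 1 1).symm
  refine ⟨a, b, c, ?_⟩
  by_contra hd
  have htr : a + d ≠ 0 := fun h => hd (by rw [eq_neg_of_add_eq_zero_right h])
  have hb : b = 0 := (mul_eq_zero.mp (by linear_combination h₀₁)).resolve_right htr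
  have hc : c = 0 := (mul_eq_zero.mp (by linear_combination h₁₀)).resolve_right htr
  have had : a = d :=
    sub_eq_zero.mp <| (mul_eq_zero.mp (by linear_combination h₀₀ - h₁₁)).resolve_right htr
  exact hA ⟨a, by subst hb hc had; ext i j; fin_cases i <;> fin_cases j <;> rfl⟩

lemma isConj_shear (a b c t : R) :
    IsConj !![a, b; c, -a] !![a + t * c, b - 2 * t * a - t * t * c; c, -(a + t * c)] :=
  ⟨⟨!![1, t; 0, 1], !![1, -t; 0, 1], by simp [one_fin_two], by simp [one_fin_two]⟩, by
    simp only [SemiconjBy, mul_fin_two]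
    ring_nf⟩

lemma isConj_swap (a b c : R) : IsConj !![a, b; c, -a] !![-a, -c; -b, a] :=
  ⟨⟨!![0, -1; 1, 0], !![0, 1; -1, 0], by simp [one_fin_two], by simp [one_fin_two]⟩, by
    simp only [SemiconjBy, mul_fin_two]
    ring_nf⟩

variable {n : Type*} [Fintype n] [DecidableEq n]

def IsProjConj (A B : Matrix n n R) : Prop := IsConj A B ∨ IsConj A (-B)

lemma IsProjConj.refl (A : Matrix n n R) : IsProjConj A A := Or.inl (.refl A)

lemma IsProjConj.neg_left {A B : Matrix n n R} (h : IsProjConj A B) : IsProjConj (-A) B := by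
  rcases h with ⟨c, hc⟩ | ⟨c, hc⟩
  · exact Or.inr ⟨c, hc.neg_right⟩
  · exact Or.inl ⟨c, by simpa using hc.neg_right⟩

lemma _root_.IsConj.trans_isProjConj {A B C : Matrix n n R} (hAB : IsConj A B)
    (hBC : IsProjConj B C) : IsProjConj A C :=
  hBC.imp hAB.trans hAB.trans

end Matrix

lemma Int.eq_zero_of_reduced {a b c : ℤ} (hu : |a * a + b * c| = 1) (ha : 2 * |a| ≤ |c|)
    (hc : |c| ≤ |b|) : a = 0 := by
  have hbc : |c| * |c| ≤ |b * c| := abs_mul b c ▸ mul_le_mul_of_nonneg_right hc (abs_nonneg c)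
  have htri : |b * c| ≤ 1 + a * a := by
    simpa [← hu, abs_mul_self] using abs_sub (a * a + b * c) (a * a)
  -- `4a² ≤ c² ≤ |bc| ≤ 1 + a²`
  nlinarith [abs_nonneg a, abs_mul_abs_self a]

lemma exists_isConj_reduced (a b c : ℤ) : ∃ a' b' c' : ℤ,
    IsConj !![a, b; c, -a] !![a', b'; c', -a'] ∧ a' * a' + b' * c' = a * a + b * c ∧
      (c' = 0 ∨ 2 * |a'| ≤ |c'| ∧ |c'| ≤ |b'|) := by
  induction hn : c.natAbs using Nat.strong_induction_on generalizing a b c with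
  | _ n ih =>
  rcases eq_or_ne c 0 with rfl | hc
  · exact ⟨a, b, 0, .refl _, rfl, .inl rfl⟩
  obtain ⟨t, ht⟩ := Int.exists_two_mul_abs_add_mul_le a c hc
  have hshear := isConj_shear a b c t
  set a₁ := a + t * c
  set b₁ := b - 2 * t * a - t * t * c
  have hdet : a₁ * a₁ + b₁ * c = a * a + b * c := by ring
  rcases lt_or_ge |b₁| |c| with hlt | hle
  · obtain ⟨a', b', c', hconj, hdet', hred⟩ :=
      ih b₁.natAbs (by rw [← hn]; zify; exact hlt) (-a₁) (-c) (-b₁) (by simp)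
    refine ⟨a', b', c', ?_, ?_, hred⟩
    · exact hshear.trans ((isConj_swap a₁ b₁ c).trans (by simpa using hconj))
    · linear_combination hdet' + hdet
  · exact ⟨a₁, b₁, c, hshear, hdet, .inr ⟨ht, hle⟩⟩

lemma isProjConj_upperTriangular (b : ℤ) :
    IsProjConj !![1, b; 0, -1] !![0, 1; 1, 0] ∨ IsProjConj !![1, b; 0, -1] !![-1, 0; 0, 1] := by
  have h := isConj_shear (1 : ℤ) b 0 (b / 2)
  simp only [mul_zero, add_zero, mul_one, sub_zero, ← Int.emod_def] at h
  rcases Int.emod_two_eq_zero_or_one b with h2 | h2 <;> rw [h2] at h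
  · exact .inr (h.trans_isProjConj (.inr (by simpa using IsConj.refl _)))
  · have hS : IsConj !![(1 : ℤ), 1; 0, -1] !![0, 1; 1, 0] :=
      ⟨⟨!![1, 1; 1, 0], !![0, 1; 1, -1], by simp [one_fin_two], by simp [one_fin_two]⟩,
        by simp [SemiconjBy]⟩
    exact .inl (h.trans_isProjConj (.inl hS))

lemma isProjConj_of_reduced {a b c : ℤ} (hu : |a * a + b * c| = 1)
    (hred : c = 0 ∨ 2 * |a| ≤ |c| ∧ |c| ≤ |b|) :
    IsProjConj !![a, b; c, -a] !![0, 1; 1, 0] ∨ IsProjConj !![a, b; c, -a] !![-1, 0; 0, 1] ∨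
      IsProjConj !![a, b; c, -a] !![0, -1; 1, 0] := by
  rcases hred with rfl | ⟨hac, hcb⟩
  · have ha : a = 1 ∨ a = -1 := mul_self_eq_one_iff.mp (by simpa [abs_mul_self] using hu)
    rcases ha with rfl | rfl
    · exact (isProjConj_upperTriangular b).imp_right .inl
    · have h := isProjConj_upperTriangular (-b)
      simp only [show !![-1, b; 0, -(-1 : ℤ)] = -!![1, -b; 0, -1] by simp]
      exact (h.imp IsProjConj.neg_left IsProjConj.neg_left).imp_right .inl
  · obtain rfl := Int.eq_zero_of_reduced hu hac hcb
    have hbc : |b| * |c| = 1 := by simpa [abs_mul] using hu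
    have hb₁ : |b| = 1 := Int.eq_one_of_mul_eq_one_right (abs_nonneg b) hbc
    have hc₁ : |c| = 1 := Int.eq_one_of_mul_eq_one_left (abs_nonneg c) hbc
    simp only [neg_zero]
    rcases abs_eq zero_le_one |>.mp hb₁ with rfl | rfl <;>
      rcases abs_eq zero_le_one |>.mp hc₁ with rfl | rfl
    · exact .inl (.refl _)
    · exact .inr (.inr (.inr (by simpa using IsConj.refl _)))
    · exact .inr (.inr (.refl _))
    · exact .inl (.inr (by simpa using IsConj.refl _))

lemma cls_neg (M : GL2Z) : cls (-M) = cls M := by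
  rw [cls, cls, QuotientGroup.eq]
  exact Subgroup.mem_center_iff.mpr fun g => by simp

lemma Matrix.IsProjConj.isConj_cls {M K : GL2Z}
    (h : IsProjConj (M : Matrix (Fin 2) (Fin 2) ℤ) K) :
    IsConj (cls M) (cls K) := by
  have key {L : GL2Z} : IsConj (M : Matrix (Fin 2) (Fin 2) ℤ) L → IsConj (cls M) (cls L) :=
    fun ⟨c, hc⟩ => (QuotientGroup.mk' _).map_isConj <|
      isConj_iff.mpr ⟨c, mul_inv_eq_of_eq_mul hc.units_of_val⟩
  rcases h with h | h
  · exact key h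
  · exact cls_neg K ▸ key (by rwa [Units.val_neg])

/-- Every element of order 2 in PGL(2,ℤ) is conjugate to [S], [N], or [T]. -/
theorem stmt_5 (p : PGL2Z) (hp : orderOf p = 2) :
    IsConj p (cls Smat) ∨ IsConj p (cls Nmat) ∨ IsConj p (cls Tmat) := by
  obtain ⟨M, rfl⟩ := QuotientGroup.mk_surjective p
  have hM : M ∉ Subgroup.center GL2Z := fun h => by
    simp [(QuotientGroup.eq_one_iff M).mpr h] at hp
  have hM2 : M * M ∈ Subgroup.center GL2Z := by
    have h := pow_orderOf_eq_one (M : PGL2Z)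
    rwa [hp, sq, ← QuotientGroup.mk_mul, QuotientGroup.eq_one_iff] at h
  rw [GeneralLinearGroup.mem_center_iff_val_mem_range_scalar] at hM hM2
  obtain ⟨a, b, c, hA⟩ := exists_eq_traceless_of_mul_self_mem_range_scalar _ hM2 hM
  have hu : |a * a + b * c| = 1 := by
    have h := Int.isUnit_iff_abs_eq.mp (isUnits_det_units M)
    rw [hA, det_fin_two_of, ← abs_neg] at h
    convert h using 2
    ring
  obtain ⟨a', b', c', hconj, hdet, hred⟩ := exists_isConj_reduced a b c
  rw [← hA] at hconj
  rw [← hdet] at hu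
  rcases isProjConj_of_reduced hu hred with h | h | h
  · exact .inl (hconj.trans_isProjConj h).isConj_cls
  · exact .inr (.inl (hconj.trans_isProjConj h).isConj_cls)
  · exact .inr (.inr (hconj.trans_isProjConj h).isConj_cls)
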